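/- arXiv:2605.27305 — 2 statements merged into one kernel-verified Lean document; each statement's English description precedes it below -/
import Mathlib

section
/- Let d ≥ 1, k ≥ 1, N = C(d+k,d), and let m₁,...,m_N ∈ ℕ^d be multi-indices such that for some coordinate i the sum ∑_{j=1}^N m_j^i is strictly less than kN/(d+1). Then the generalised Vandermonde determinant det Van_d^k(m₁,...,m_N) = 0. -/
/-!
Expand every monomial `∏ₜ xₜ ^ aₜ` in products of falling factorials `∏ₜ xₜ.descFactorial bₜ`
with `b ≤ a`; the coefficients are products of Stirling numbers of the second kind. Since the
exponents `r j` form a down-set, this factors the Vandermonde matrix as `C * D` with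
`D j n = ∏ₜ (m n t).descFactorial (r j t)`. In every term of the Leibniz expansion of `det D`
some point has `m n i < r (σ n) i`, because `∑ₙ m n i < ∑ⱼ r j i`, and then the falling factorial
vanishes. Finally `∑ⱼ r j i = S`: appending the slack coordinate `k - |v|` identifies the
multi-indices of degree `≤ k` in `d` variables with those of degree exactly `k` in `d + 1`
variables, on which all `d + 1` coordinate sums agree by symmetry and add up to `k N`.
-/

open Finset

theorem Nat.mul_descFactorial_eq_descFactorial_succ_add (x b : ℕ) :
    x * x.descFactorial b = x.descFactorial (b + 1) + b * x.descFactorial b := by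
  rcases le_or_gt b x with h | h
  · rw [Nat.descFactorial_succ, ← add_mul, Nat.sub_add_cancel h]
  · simp [Nat.descFactorial_eq_zero_iff_lt.mpr h]

theorem Nat.pow_eq_sum_stirlingSecond_mul_descFactorial (x : ℕ) : ∀ a : ℕ,
    x ^ a = ∑ b ∈ range (a + 1), a.stirlingSecond b * x.descFactorial b
  | 0 => by simp
  | a + 1 => by
    have shift : ∑ b ∈ range (a + 1), (b + 1) * a.stirlingSecond (b + 1) * x.descFactorial (b + 1)
        = ∑ b ∈ range (a + 1), b * a.stirlingSecond b * x.descFactorial b := by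
      calc _ = ∑ b ∈ range (a + 2), b * a.stirlingSecond b * x.descFactorial b := by
            rw [sum_range_succ' _ (a + 1), zero_mul, zero_mul, add_zero]
        _ = _ := by rw [sum_range_succ, Nat.stirlingSecond_eq_zero_of_lt (lt_add_one a)]; simp
    calc x ^ (a + 1) = ∑ b ∈ range (a + 1), a.stirlingSecond b * (x * x.descFactorial b) := by
          rw [pow_succ', Nat.pow_eq_sum_stirlingSecond_mul_descFactorial x a, mul_sum]
          exact sum_congr rfl fun b _ => by ring
      _ = ∑ b ∈ range (a + 1), (b + 1) * a.stirlingSecond (b + 1) * x.descFactorial (b + 1)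
          + ∑ b ∈ range (a + 1), a.stirlingSecond b * x.descFactorial (b + 1) := by
          rw [shift, ← sum_add_distrib]
          exact sum_congr rfl fun b _ => by
            rw [Nat.mul_descFactorial_eq_descFactorial_succ_add]; ring
      _ = _ := by
          rw [sum_range_succ' _ (a + 1), ← sum_add_distrib]
          simp [Nat.stirlingSecond_succ_succ, add_mul]

section
variable {n κ ι R : Type*} [Fintype n] [Fintype ι]

theorem sum_prod_stirlingSecond_mul_descFactorial {s : Finset (ι → ℕ)} {a : ι → ℕ}
    (hs : ∀ b ≤ a, b ∈ s) (x : ι → ℕ) :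
    ∑ b ∈ s, ∏ t, (a t).stirlingSecond (b t) * (x t).descFactorial (b t) = ∏ t, x t ^ a t := by
  classical
  have hbox : Fintype.piFinset (fun t => range (a t + 1)) ⊆ s := fun b hb =>
    hs b fun t => Nat.lt_succ_iff.mp (mem_range.mp (Fintype.mem_piFinset.mp hb t))
  rw [← sum_subset hbox, ← prod_univ_sum (fun t => range (a t + 1))
    fun t c => (a t).stirlingSecond c * (x t).descFactorial c]
  · exact prod_congr rfl fun t _ => (Nat.pow_eq_sum_stirlingSecond_mul_descFactorial _ _).symm
  · intro b _ hb
    obtain ⟨t, ht⟩ : ∃ t, a t < b t := by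
      simpa [Fintype.mem_piFinset, Nat.lt_succ_iff] using hb
    exact prod_eq_zero (mem_univ t) (by rw [Nat.stirlingSecond_eq_zero_of_lt ht, zero_mul])

theorem Matrix.of_prod_pow_eq_mul {r : n → ι → ℕ} (hinj : Function.Injective r)
    (hr : ∀ j, ∀ b ≤ r j, ∃ j', r j' = b) (m : κ → ι → ℕ) :
    Matrix.of (fun j p => ∏ t, m p t ^ r j t) =
      Matrix.of (fun j j' => ∏ t, (r j t).stirlingSecond (r j' t)) *
        Matrix.of fun j p => ∏ t, (m p t).descFactorial (r j t) := by
  classical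
  ext j p
  rw [Matrix.mul_apply, of_apply,
    ← sum_prod_stirlingSecond_mul_descFactorial (s := univ.image r) (fun b hb => ?_),
    sum_image hinj.injOn]
  · simp only [of_apply, prod_mul_distrib]
  · obtain ⟨j', rfl⟩ := hr j b hb
    exact mem_image_of_mem r (mem_univ j')

variable [DecidableEq n] [CommRing R]

theorem Matrix.det_eq_zero_of_forall_perm_exists_eq_zero (M : Matrix n n R)
    (h : ∀ σ : Equiv.Perm n, ∃ j, M (σ j) j = 0) : M.det = 0 := by
  rw [Matrix.det_apply]
  refine sum_eq_zero fun σ _ => ?_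
  obtain ⟨j, hj⟩ := h σ
  have hzero : ∏ i, M (σ i) i = 0 := prod_eq_zero (mem_univ j) hj
  rw [hzero, smul_zero]

theorem det_descFactorial_eq_zero_of_sum_lt (r m : n → ι → ℕ) {i : ι}
    (h : ∑ p, m p i < ∑ j, r j i) :
    (Matrix.of fun j p => ∏ t, ((m p t).descFactorial (r j t) : R)).det = 0 := by
  refine Matrix.det_eq_zero_of_forall_perm_exists_eq_zero _ fun σ => ?_
  rw [← Equiv.sum_comp σ (fun j => r j i)] at h
  obtain ⟨p, -, hp⟩ := exists_lt_of_sum_lt h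
  refine ⟨p, ?_⟩
  rw [Matrix.of_apply]
  exact prod_eq_zero (mem_univ i) (by rw [Nat.descFactorial_eq_zero_iff_lt.mpr hp, Nat.cast_zero])

theorem det_prod_pow_eq_zero_of_sum_lt {r : n → ι → ℕ} (hinj : Function.Injective r)
    (hr : ∀ j, ∀ b ≤ r j, ∃ j', r j' = b) (m : n → ι → ℕ) {i : ι}
    (h : ∑ p, m p i < ∑ j, r j i) :
    (Matrix.of fun j p => ∏ t, (m p t : R) ^ r j t).det = 0 := by
  have hcast : (Matrix.of fun j p => ∏ t, (m p t : R) ^ r j t) =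
      (Matrix.of fun j p => ∏ t, m p t ^ r j t).map (Nat.castRingHom R) := by
    ext; simp
  rw [hcast, Matrix.of_prod_pow_eq_mul hinj hr, Matrix.map_mul, Matrix.det_mul]
  convert mul_zero _
  convert det_descFactorial_eq_zero_of_sum_lt (R := R) r m h
  ext; simp

end

theorem Finset.Nat.sum_antidiagonalTuple_apply_mul (n k : ℕ) (j : Fin n) :
    (∑ w ∈ Nat.antidiagonalTuple n k, w j) * n = k * #(Nat.antidiagonalTuple n k) := by
  have hsymm : ∀ j', ∑ w ∈ Nat.antidiagonalTuple n k, w j' =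
      ∑ w ∈ Nat.antidiagonalTuple n k, w j := by
    intro j'
    refine sum_nbij' (· ∘ Equiv.swap j j') (· ∘ Equiv.swap j j') ?_ ?_ ?_ ?_ ?_
    all_goals simp [Nat.mem_antidiagonalTuple, Function.comp_def, Equiv.sum_comp]
  calc (∑ w ∈ Nat.antidiagonalTuple n k, w j) * n
      = ∑ j', ∑ w ∈ Nat.antidiagonalTuple n k, w j' := by simp [hsymm, mul_comm]
    _ = ∑ w ∈ Nat.antidiagonalTuple n k, k := by
      rw [sum_comm]; exact sum_congr rfl fun w hw => Nat.mem_antidiagonalTuple.mp hw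
    _ = k * #(Nat.antidiagonalTuple n k) := by rw [sum_const, smul_eq_mul, mul_comm]

section
variable {ι : Type*} [Fintype ι] {d k : ℕ} {r : ι → Fin d → ℕ}

theorem image_cons_eq_antidiagonalTuple (hcomp : ∀ v : Fin d → ℕ, ∑ t, v t ≤ k ↔ ∃ j, r j = v) :
    univ.image (fun j => (Fin.cons (k - ∑ t, r j t) (r j) : Fin (d + 1) → ℕ)) =
      Nat.antidiagonalTuple (d + 1) k := by
  ext w
  simp only [mem_image, mem_univ, true_and, Nat.mem_antidiagonalTuple, Fin.sum_univ_succ]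
  constructor
  · rintro ⟨j, rfl⟩
    have := (hcomp (r j)).2 ⟨j, rfl⟩
    simp only [Fin.cons_zero, Fin.cons_succ]
    omega
  · intro hw
    obtain ⟨j, hj⟩ := (hcomp (Fin.tail w)).1 (by simp only [Fin.tail]; omega)
    refine ⟨j, ?_⟩
    conv_rhs => rw [← Fin.cons_self_tail w]
    rw [hj]
    congr 1
    simp only [Fin.tail]
    omega

theorem sum_apply_mul_succ_eq_mul_card (hinj : Function.Injective r)
    (hcomp : ∀ v : Fin d → ℕ, ∑ t, v t ≤ k ↔ ∃ j, r j = v) (i : Fin d) :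
    (∑ j, r j i) * (d + 1) = k * Fintype.card ι := by
  have hcons_inj : Function.Injective
      (fun j => (Fin.cons (k - ∑ t, r j t) (r j) : Fin (d + 1) → ℕ)) :=
    fun a b h => hinj (by simpa using congrArg Fin.tail h)
  rw [← card_univ, ← card_image_of_injective _ hcons_inj, image_cons_eq_antidiagonalTuple hcomp,
    ← Nat.sum_antidiagonalTuple_apply_mul _ _ i.succ, ← image_cons_eq_antidiagonalTuple hcomp,
    sum_image hcons_inj.injOn]
  simp

end

theorem stmt14_general (d k : ℕ) (N : ℕ)
    (r : Fin N → Fin d → ℕ) (hinj : Function.Injective r)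
    (hcomp : ∀ v : Fin d → ℕ, (∑ i, v i) ≤ k ↔ ∃ j, r j = v)
    (S : ℕ) (hS : S * (d + 1) = k * N)
    (m : Fin N → Fin d → ℕ)
    (i : Fin d) (hdef : (∑ j, m j i) < S) :
    Matrix.det (Matrix.of fun j n : Fin N => ∏ i, ((m n i : ℚ)) ^ (r j i)) = 0 := by
  have hS_eq : S = ∑ j, r j i := Nat.eq_of_mul_eq_mul_right (Nat.succ_pos d) <| by
    rw [hS, sum_apply_mul_succ_eq_mul_card hinj hcomp i, Fintype.card_fin]
  have hdown : ∀ j, ∀ b ≤ r j, ∃ j', r j' = b := fun j b hb =>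
    (hcomp b).1 ((sum_le_sum fun t _ => hb t).trans ((hcomp (r j)).2 ⟨j, rfl⟩))
  exact det_prod_pow_eq_zero_of_sum_lt hinj hdown m (hS_eq ▸ hdef)

/-- **deficiency vanishing.** Let `d ≥ 1`, `k ≥ 1`, `N = C(d+k,d)`,
`r : Fin N → ℕ^d` an enumeration of all multi-indices of total degree ≤ k, and let
`S = kN/(d+1)` (so `S(d+1) = kN`).  If `m₁,…,m_N ∈ ℕ^d` satisfy
`∑_j m_j^i < S` for some coordinate `i`, then the generalised Vandermonde
determinant `det(∏_i (m_n^i)^{r_j^i})` vanishes. -/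
theorem stmt14 (d k : ℕ) (hd : 1 ≤ d) (hk : 1 ≤ k)
    (N : ℕ) (hN : N = Nat.choose (d + k) d)
    (r : Fin N → Fin d → ℕ) (hinj : Function.Injective r)
    (hcomp : ∀ v : Fin d → ℕ, (∑ i, v i) ≤ k ↔ ∃ j, r j = v)
    (S : ℕ) (hS : S * (d + 1) = k * N)
    (m : Fin N → Fin d → ℕ)
    (i : Fin d) (hdef : (∑ j, m j i) < S) :
    Matrix.det (Matrix.of fun j n : Fin N => ∏ i, ((m n i : ℚ)) ^ (r j i)) = 0 :=
  stmt14_general d k N r hinj hcomp S hS m i hdef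
end

section
/- Let d ≥ 1, k ≥ 1, N = C(d+k,d). Suppose a₁,...,a_N are monomials in d variables with nonnegative integer exponents such that ∑_{j=1}^N deg(a_j) ≤ kdN/(d+1) and the complete generalised Wronskian W_d^k(a₁,...,a_N) is a nonzero constant. Then, up to reordering and scalar factors, the a_j are exactly the divided-power monomials x^{r_j}/r_j! for the N multi-indices r_j of total degree ≤ k; more precisely, the multiset of exponent multi-indices of a₁,...,a_N equals the set of all multi-indices of total degree ≤ k. -/
open MvPolynomial

/-- Iterated partial derivative `∂^{|r|}/∂x^r` along a multi-index `r : Fin d → ℕ`. -/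
noncomputable def wDeriv (d : ℕ) (r : Fin d → ℕ)
    (p : MvPolynomial (Fin d) ℚ) : MvPolynomial (Fin d) ℚ :=
  (List.finRange d).foldl (fun q i => (⇑(pderiv i))^[r i] q) p

/-!
A nonzero determinant has a nonvanishing term, i.e. a permutation `σ` with every entry
`∂^{r (σ n)} a_n` nonzero; for monomials this forces `r (σ n) ≤ kk n` coordinatewise. Summing
degrees, `∑ |r j| ≤ ∑ |kk n| ≤ T`, and `∑ |r j| = T` because adding the slack coordinate
`k - |v|` identifies `{|v| ≤ k}` in `ℕ^d` with `{|w| = k}` in `ℕ^(d+1)`, on which all `d + 1`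
coordinates have the same sum by symmetry. Hence all the inequalities are equalities and
`kk = r ∘ σ`.
-/

open Finset

section IteratedDerivative

variable {σ R : Type*} [CommSemiring R]

theorem iterate_pderiv_monomial (i : σ) (m : ℕ) (s : σ →₀ ℕ) (a : R) :
    (⇑(pderiv i))^[m] (monomial s a) =
      monomial (s - Finsupp.single i m) (a * (s i).descFactorial m) := by
  induction m with
  | zero => simp
  | succ m ih =>
    rw [Function.iterate_succ_apply', ih, pderiv_monomial, tsub_tsub, ← Finsupp.single_add,
      Finsupp.tsub_apply, Finsupp.single_eq_same, Nat.descFactorial_succ,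
      Nat.cast_mul, mul_comm ((s i - m : ℕ) : R), mul_assoc]

theorem foldl_iterate_pderiv_monomial (r : σ → ℕ) {L : List σ} (hL : L.Nodup)
    (s : σ →₀ ℕ) (a : R) :
    L.foldl (fun q i => (⇑(pderiv i))^[r i] q) (monomial s a) =
      monomial (s - (L.map fun i => Finsupp.single i (r i)).sum)
        (a * (L.map fun i => ((s i).descFactorial (r i) : R)).prod) := by
  induction L generalizing s a with
  | nil => simp
  | cons i L ih =>
    obtain ⟨hi, hL⟩ := List.nodup_cons.mp hL
    have hmap : L.map (fun j => (((s - Finsupp.single i (r i)) j).descFactorial (r j) : R)) =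
        L.map fun j => ((s j).descFactorial (r j) : R) :=
      List.map_congr_left fun j hj => by
        rw [Finsupp.tsub_apply, Finsupp.single_eq_of_ne (by rintro rfl; exact hi hj), Nat.sub_zero]
    rw [List.foldl_cons, iterate_pderiv_monomial, ih hL, hmap, tsub_tsub]
    simp only [List.map_cons, List.sum_cons, List.prod_cons, mul_assoc]

end IteratedDerivative

theorem wDeriv_monomial (d : ℕ) (r : Fin d → ℕ) (s : Fin d →₀ ℕ) (a : ℚ) :
    wDeriv d r (monomial s a) =
      monomial (s - Finsupp.equivFunOnFinite.symm r)
        (a * ∏ i, ((s i).descFactorial (r i) : ℚ)) := by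
  rw [wDeriv, foldl_iterate_pderiv_monomial r (List.nodup_finRange d),
    Finsupp.equivFunOnFinite_symm_eq_sum, Fin.sum_univ_def, Fin.prod_univ_def]

theorem le_of_wDeriv_ne_zero {d : ℕ} {r u : Fin d → ℕ} {a : ℚ}
    (h : wDeriv d r (C a * ∏ i, X i ^ u i) ≠ 0) : r ≤ u := by
  intro i
  by_contra! hlt
  have hprod : ∏ j, (((Finsupp.equivFunOnFinite.symm u) j).descFactorial (r j) : ℚ) = 0 :=
    prod_eq_zero (mem_univ i) (by simp [Nat.descFactorial_eq_zero_iff_lt, hlt])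
  have hmono : C a * ∏ i, X i ^ u i = monomial (Finsupp.equivFunOnFinite.symm u) a := by
    rw [monomial_eq, Finsupp.prod_fintype] <;> simp
  exact h (by rw [hmono, wDeriv_monomial, hprod, mul_zero, monomial_zero])

theorem Matrix.exists_perm_forall_ne_zero_of_det_ne_zero {n R : Type*} [Fintype n]
    [DecidableEq n] [CommRing R] {A : Matrix n n R} (h : A.det ≠ 0) :
    ∃ τ : Equiv.Perm n, ∀ i, A (τ i) i ≠ 0 := by
  rw [Matrix.det_apply] at h
  obtain ⟨τ, -, hτ⟩ := exists_ne_zero_of_sum_ne_zero h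
  refine ⟨τ, fun i hi => hτ ?_⟩
  rw [prod_eq_zero (f := fun j => A (τ j) j) (mem_univ i) hi, smul_zero]

namespace Finset.Nat

theorem sum_antidiagonalTuple_apply_eq (m n : ℕ) (i j : Fin m) :
    ∑ w ∈ antidiagonalTuple m n, w i = ∑ w ∈ antidiagonalTuple m n, w j := by
  refine sum_equiv ((Equiv.swap i j).arrowCongr (.refl ℕ)) (fun w => ?_) (fun w _ => ?_)
  · simp only [mem_antidiagonalTuple, Equiv.arrowCongr_apply, Equiv.symm_swap,
      Equiv.coe_refl, Function.comp_apply, id_eq, Equiv.sum_comp]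
  · simp

theorem mul_sum_antidiagonalTuple_apply (m n : ℕ) (i : Fin m) :
    m * ∑ w ∈ antidiagonalTuple m n, w i = n * #(antidiagonalTuple m n) := by
  calc m * ∑ w ∈ antidiagonalTuple m n, w i
      = ∑ j : Fin m, ∑ w ∈ antidiagonalTuple m n, w j := by
        simp [sum_antidiagonalTuple_apply_eq m n _ i]
    _ = ∑ w ∈ antidiagonalTuple m n, n := by
        rw [sum_comm]; exact sum_congr rfl fun w hw => mem_antidiagonalTuple.mp hw
    _ = n * #(antidiagonalTuple m n) := by rw [sum_const, smul_eq_mul, mul_comm]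

end Finset.Nat

open Finset.Nat in
theorem sum_degree_mul_succ_eq {d k N : ℕ} {r : Fin N → Fin d → ℕ}
    (hinj : Function.Injective r)
    (hcomp : ∀ v : Fin d → ℕ, (∑ i, v i) ≤ k ↔ ∃ j, r j = v) :
    (∑ j, ∑ i, r j i) * (d + 1) = k * d * N := by
  set φ : Fin N → Fin (d + 1) → ℕ := fun j => Fin.cons (k - ∑ i, r j i) (r j)
  have hφ : φ.Injective := fun j j' h => hinj (by simpa [φ] using congrArg Fin.tail h)
  have hE : antidiagonalTuple (d + 1) k = univ.image φ := by
    ext w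
    simp only [mem_antidiagonalTuple, mem_image, mem_univ, true_and, Fin.sum_univ_succ]
    constructor
    · intro hw
      obtain ⟨j, hj⟩ := (hcomp (Fin.tail w)).mp (by simp only [Fin.tail]; omega)
      refine ⟨j, ?_⟩
      rw [← Fin.cons_self_tail w]
      simp only [φ, hj, Fin.tail]
      congr 1
      omega
    · rintro ⟨j, rfl⟩
      have := (hcomp (r j)).mpr ⟨j, rfl⟩
      simp only [φ, Fin.cons_zero, Fin.cons_succ]
      omega
  have hcard : #(antidiagonalTuple (d + 1) k) = N := by
    rw [hE, card_image_of_injective _ hφ, card_univ, Fintype.card_fin]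
  have hsum :
      ∑ j, ∑ i, r j i = ∑ i : Fin d, ∑ w ∈ antidiagonalTuple (d + 1) k, w i.succ := by
    simp_rw [hE, sum_image (fun j _ j' _ h => hφ h)]
    rw [sum_comm]
    simp [φ]
  calc (∑ j, ∑ i, r j i) * (d + 1)
      = ∑ i : Fin d, (d + 1) * ∑ w ∈ antidiagonalTuple (d + 1) k, w i.succ := by
        rw [hsum, sum_mul]; simp only [mul_comm]
    _ = k * d * N := by simp [mul_sum_antidiagonalTuple_apply, hcard]; ring

theorem eq_of_le_of_sum_sum_le {ι κ : Type*} [Fintype ι] [Fintype κ] {f g : ι → κ → ℕ}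
    (hle : f ≤ g) (hsum : ∑ i, ∑ j, g i j ≤ ∑ i, ∑ j, f i j) : f = g := by
  have hrow : ∀ i ∈ univ, ∑ j, f i j = ∑ j, g i j :=
    (sum_eq_sum_iff_of_le fun i _ => sum_le_sum fun j _ => hle i j).mp
      (le_antisymm (sum_le_sum fun i _ => sum_le_sum fun j _ => hle i j) hsum)
  ext i j
  exact (sum_eq_sum_iff_of_le fun j _ => hle i j).mp (hrow i (mem_univ i)) j (mem_univ j)

theorem stmt15_general (d k : ℕ)
    (N : ℕ)
    (r : Fin N → Fin d → ℕ) (hinj : Function.Injective r)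
    (hcomp : ∀ v : Fin d → ℕ, (∑ i, v i) ≤ k ↔ ∃ j, r j = v)
    (T : ℕ) (hT : T * (d + 1) = k * d * N)
    (kk : Fin N → Fin d → ℕ) (c : Fin N → ℚ)
    (hdeg : (∑ n, ∑ i, kk n i) ≤ T)
    (t : ℚ) (ht : t ≠ 0)
    (hW : Matrix.det (Matrix.of fun j n : Fin N =>
        wDeriv d (r j) (C (c n) * ∏ i, X i ^ kk n i)) = C t) :
    Function.Injective kk ∧
      ∀ v : Fin d → ℕ, (∑ i, v i) ≤ k ↔ ∃ n, kk n = v := by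
  have hrT : ∑ j, ∑ i, r j i = T :=
    Nat.eq_of_mul_eq_mul_right d.succ_pos ((sum_degree_mul_succ_eq hinj hcomp).trans hT.symm)
  obtain ⟨σ, hσ⟩ := Matrix.exists_perm_forall_ne_zero_of_det_ne_zero
    (hW ▸ C_ne_zero.mpr ht)
  have hkk : r ∘ σ = kk := by
    refine eq_of_le_of_sum_sum_le (fun n => le_of_wDeriv_ne_zero (hσ n)) ?_
    rwa [Function.comp_def, Equiv.sum_comp σ fun j => ∑ i, r j i, hrT]
  subst hkk
  exact ⟨hinj.comp σ.injective, fun v => (hcomp v).trans σ.surjective.exists⟩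

/-- **consistency lemma.** Let `d ≥ 1`, `k ≥ 1`, `N = C(d+k,d)`, and
let `r : Fin N → ℕ^d` enumerate all multi-indices of total degree ≤ k.  Let `T` be
the total degree shift, `T(d+1) = kdN`.  Suppose `a₁,…,a_N` are monomials
`a_n = c_n · x^{k_n}` with nonzero coefficients, with `∑_n deg(a_n) ≤ T`, and whose
complete generalised Wronskian is a nonzero constant.  Then the exponent
multi-indices `k₁,…,k_N` are pairwise distinct and are exactly all multi-indices of
total degree ≤ k. -/
theorem stmt15 (d k : ℕ) (hd : 1 ≤ d) (hk : 1 ≤ k)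
    (N : ℕ) (hN : N = Nat.choose (d + k) d)
    (r : Fin N → Fin d → ℕ) (hinj : Function.Injective r)
    (hcomp : ∀ v : Fin d → ℕ, (∑ i, v i) ≤ k ↔ ∃ j, r j = v)
    (T : ℕ) (hT : T * (d + 1) = k * d * N)
    (kk : Fin N → Fin d → ℕ) (c : Fin N → ℚ) (hc : ∀ n, c n ≠ 0)
    (hdeg : (∑ n, ∑ i, kk n i) ≤ T)
    (t : ℚ) (ht : t ≠ 0)
    (hW : Matrix.det (Matrix.of fun j n : Fin N =>
        wDeriv d (r j) (C (c n) * ∏ i, X i ^ kk n i)) = C t) :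
    Function.Injective kk ∧
      ∀ v : Fin d → ℕ, (∑ i, v i) ≤ k ↔ ∃ n, kk n = v :=
  stmt15_general d k N r hinj hcomp T hT kk c hdeg t ht hW
end
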